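/- arXiv:2001.03593 — 3 statements merged into one kernel-verified Lean document; each statement's English description precedes it below -/
import Mathlib

section
/- Let 0 < ζ < 1 and 0 < p < 1 with ζ·p < 1, and set t := ζ·p. Then D(t‖p) ≥ p·(ζ·ln ζ − ζ + 1), where D(t‖p) := t·ln(t/p) + (1−t)·ln((1−t)/(1−p)). -/
open Real

lemma sub_le_mul_log_div {a b : ℝ} (ha : 0 < a) (hb : 0 < b) : a - b ≤ a * log (a / b) := by
  have h := one_sub_inv_le_log_of_pos (div_pos ha hb)
  rw [inv_div] at h
  calc a - b = a * (1 - b / a) := by field_simp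
    _ ≤ a * log (a / b) := mul_le_mul_of_nonneg_left h ha.le

theorem stmt2_general (ζ p : ℝ) (hp0 : 0 < p) (hp1 : p < 1)
    (hζp : ζ * p < 1) :
    (ζ * p) * Real.log ((ζ * p) / p) + (1 - ζ * p) * Real.log ((1 - ζ * p) / (1 - p))
      ≥ p * (ζ * Real.log ζ - ζ + 1) := by
  have hfirst : log (ζ * p / p) = log ζ := by rw [mul_div_cancel_right₀ _ hp0.ne']
  have hsecond := sub_le_mul_log_div (sub_pos.2 hζp) (sub_pos.2 hp1)
  rw [hfirst]
  linarith

/-- For `0 < ζ < 1`, `0 < p < 1` with `ζ p < 1` and `t := ζ p`,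
`D(t‖p) ≥ p (ζ ln ζ - ζ + 1)`. -/
theorem stmt2 (ζ p : ℝ) (hζ0 : 0 < ζ) (hζ1 : ζ < 1) (hp0 : 0 < p) (hp1 : p < 1)
    (hζp : ζ * p < 1) :
    (ζ * p) * Real.log ((ζ * p) / p) + (1 - ζ * p) * Real.log ((1 - ζ * p) / (1 - p))
      ≥ p * (ζ * Real.log ζ - ζ + 1) :=
  stmt2_general ζ p hp0 hp1 hζp
end

section
/- If U²_{Z'|X} is stochastically degraded with respect to U¹_{Z|X}, and the adversarial channel W_{Y|X,S} is U²-overwritable, then W_{Y|X,S} is also U¹-overwritable. -/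
open scoped BigOperators

/-- A channel: nonnegative entries, rows summing to 1. -/
def IsChannel {A B : Type*} [Fintype B] (P : A → B → ℝ) : Prop :=
  (∀ a b, 0 ≤ P a b) ∧ ∀ a, ∑ b, P a b = 1

/-- `P` is stochastically degraded with respect to `Q`. -/
def Degraded {X Z₂ Z₁ : Type*} [Fintype Z₂] [Fintype Z₁]
    (P : X → Z₂ → ℝ) (Q : X → Z₁ → ℝ) : Prop :=
  ∃ R : Z₁ → Z₂ → ℝ, IsChannel R ∧ ∀ x z₂, P x z₂ = ∑ z₁, R z₁ z₂ * Q x z₁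

/-- `W` (with no-adversary state `s₀`) is `U`-overwritable: there is a channel
`P_{S|X',Z}` with `∑_{s,z} U(z|x) P(s|x',z) W(y|x,s) = W(y|x',s₀)` for all `x,x',y`. -/
def UOverwritable {X Y S Z : Type*} [Fintype Y] [Fintype S] [Fintype Z]
    (W : X → S → Y → ℝ) (s₀ : S) (U : X → Z → ℝ) : Prop :=
  ∃ P : X → Z → S → ℝ, (∀ x' z, (∀ s, 0 ≤ P x' z s) ∧ ∑ s, P x' z s = 1) ∧
    ∀ x x' y, ∑ s, ∑ z, U x z * P x' z s * W x s y = W x' s₀ y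

open Finset

theorem IsChannel.comp {A B C : Type*} [Fintype B] [Fintype C]
    {R : A → B → ℝ} {Q : B → C → ℝ} (hR : IsChannel R) (hQ : IsChannel Q) :
    IsChannel fun a c => ∑ b, R a b * Q b c := by
  refine ⟨fun a c => sum_nonneg fun b _ => mul_nonneg (hR.1 a b) (hQ.1 b c), fun a => ?_⟩
  simp_rw [sum_comm (γ := C), ← mul_sum, hQ.2, mul_one, hR.2]

theorem sum_mul_sum_eq_sum_mul {Z Z' : Type*} [Fintype Z] [Fintype Z']
    {u : Z → ℝ} {v : Z' → ℝ} {R : Z → Z' → ℝ} (hv : ∀ z', v z' = ∑ z, R z z' * u z)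
    (p : Z' → ℝ) : ∑ z, u z * ∑ z', R z z' * p z' = ∑ z', v z' * p z' := by
  simp_rw [hv, mul_sum, sum_mul]
  rw [sum_comm]
  exact sum_congr rfl fun _ _ => sum_congr rfl fun _ _ => by ring

theorem stmt5_general {X Y S Z Z' : Type*}
    [Fintype Y] [Fintype S] [Fintype Z] [Fintype Z']
    (W : X → S → Y → ℝ) (s₀ : S)
    (U₁ : X → Z → ℝ) (U₂ : X → Z' → ℝ)
    (hdeg : Degraded U₂ U₁) (hover : UOverwritable W s₀ U₂) :
    UOverwritable W s₀ U₁ := by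
  obtain ⟨R, hR, hU⟩ := hdeg
  obtain ⟨P, hP, hPW⟩ := hover
  -- Overwrite through the degrading channel: draw `z'` from `R(·|z)`, then the state from `P(·|x',z')`.
  have hcomp x' : IsChannel fun z s => ∑ z', R z z' * P x' z' s :=
    hR.comp ⟨fun z' s => (hP x' z').1 s, fun z' => (hP x' z').2⟩
  refine ⟨fun x' z s => ∑ z', R z z' * P x' z' s,
    fun x' z => ⟨(hcomp x').1 z, (hcomp x').2 z⟩, fun x x' y => ?_⟩
  rw [← hPW x x' y]
  refine sum_congr rfl fun s _ => ?_
  rw [← sum_mul, ← sum_mul, sum_mul_sum_eq_sum_mul (hU x)]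

/-- If `U²` is stochastically degraded with respect to `U¹` and `W`
is `U²`-overwritable, then `W` is `U¹`-overwritable. -/
theorem stmt5 {X Y S Z Z' : Type*}
    [Fintype X] [Fintype Y] [Fintype S] [Fintype Z] [Fintype Z']
    (W : X → S → Y → ℝ) (s₀ : S) (hW : ∀ s, IsChannel (fun x y => W x s y))
    (U₁ : X → Z → ℝ) (U₂ : X → Z' → ℝ)
    (hU₁ : IsChannel U₁) (hU₂ : IsChannel U₂)
    (hdeg : Degraded U₂ U₁) (hover : UOverwritable W s₀ U₂) :
    UOverwritable W s₀ U₁ :=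
  stmt5_general W s₀ U₁ U₂ hdeg hover
end

section
/- Consider the myopic binary adversarial channel MBAC_{p,q} where W(y|x,s) = BSC(p)(y | x ⊕ s) for s ∈ {0,1} and W(y|x,s₀) = BSC(p)(y|x), and the channel to the adversary is U = BSC(q). If 0 < q ≤ 1/2 and 0 ≤ p < 1/2, then W is not U-overwritable. -/
open scoped BigOperators

/-- The binary symmetric channel with crossover probability `r`. -/
def BSC (r : ℝ) : Bool → Bool → ℝ := fun x y => if y = x then 1 - r else r

/-- The myopic binary adversarial channel `MBAC_{p,·}`: states are `Option Bool`,
`none` is the no-adversary state `s₀`; a binary state `s` is added to the input. -/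
def MBAC (p : ℝ) : Bool → Option Bool → Bool → ℝ := fun x s y =>
  match s with
  | none => BSC p x y
  | some b => BSC p (xor x b) y

/-!
Only the state `some true` changes the channel, by flipping the input. Feeding `x' = 0`
and reading `y = 0`, the overwriting identity at `x = 0` says that the adversary, averaged over
its observation `z ~ BSC(q)(·|0)`, flips with probability `0`; since `0 < q < 1` both
observations have positive weight, so it never flips. At `x = 1` the output at `y = 0` then
averages to `W(0|1,s₀) = p`, while it should equal `W(0|0,s₀) = 1 - p`.
-/

@[simp] lemma BSC_self (r : ℝ) (x : Bool) : BSC r x x = 1 - r := if_pos rfl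

@[simp] lemma BSC_not_left (r : ℝ) (x : Bool) : BSC r (!x) x = r := by
  cases x <;> rfl

lemma BSC_pos {r : ℝ} (hr0 : 0 < r) (hr1 : r < 1) (x y : Bool) : 0 < BSC r x y := by
  unfold BSC; split_ifs <;> linarith

lemma sum_BSC_eq_one (r : ℝ) (x : Bool) : ∑ y, BSC r x y = 1 := by
  cases x <;> simp [BSC]

lemma sum_BSC_mul_affine (r a b : ℝ) (x : Bool) (f : Bool → ℝ) :
    ∑ z, BSC r x z * (a + b * f z) = a + b * ∑ z, BSC r x z * f z := by
  simp only [mul_add, Finset.sum_add_distrib, ← Finset.sum_mul, sum_BSC_eq_one, one_mul,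
    Finset.mul_sum]
  congr 1
  exact Finset.sum_congr rfl fun z _ => by ring

lemma eq_zero_of_sum_BSC_mul_eq_zero {r : ℝ} (hr0 : 0 < r) (hr1 : r < 1) {x : Bool}
    {f : Bool → ℝ} (hf : ∀ z, 0 ≤ f z) (h : ∑ z, BSC r x z * f z = 0) (z : Bool) : f z = 0 := by
  have hterm := (Finset.sum_eq_zero_iff_of_nonneg fun z _ =>
    mul_nonneg (BSC_pos hr0 hr1 x z).le (hf z)).1 h z (Finset.mem_univ z)
  exact (mul_eq_zero.1 hterm).resolve_left (BSC_pos hr0 hr1 x z).ne'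

lemma sum_mul_MBAC (p : ℝ) (π : Option Bool → ℝ) (hπ : ∑ s, π s = 1) (x y : Bool) :
    ∑ s, π s * MBAC p x s y = BSC p x y + (BSC p (!x) y - BSC p x y) * π (some true) := by
  simp only [Fintype.sum_option, Fintype.sum_bool] at hπ ⊢
  simp only [MBAC, Bool.xor_true, Bool.xor_false]
  linear_combination BSC p x y * hπ

theorem stmt12_general (p q : ℝ) (hq0 : 0 < q) (hq : q ≤ 1 / 2) (hp : p < 1 / 2) :
    ¬ ∃ P : Bool → Bool → Option Bool → ℝ,
      (∀ x' z, (∀ s, 0 ≤ P x' z s) ∧ ∑ s, P x' z s = 1) ∧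
      ∀ x x' y, ∑ s, ∑ z, BSC q x z * P x' z s * MBAC p x s y = MBAC p x' none y := by
  rintro ⟨P, hP, hW⟩
  have hq1 : q < 1 := by linarith
  set flipProb : Bool → ℝ := fun z => P false z (some true)
  have hout (x y : Bool) : BSC p x y + (BSC p (!x) y - BSC p x y) *
      ∑ z, BSC q x z * flipProb z = BSC p false y := by
    rw [← sum_BSC_mul_affine]
    change _ = MBAC p false none y
    rw [← hW x false y, Finset.sum_comm]
    refine Finset.sum_congr rfl fun z _ => ?_
    rw [← sum_mul_MBAC p _ (hP false z).2, Finset.mul_sum]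
    exact Finset.sum_congr rfl fun s _ => by ring
  have hflip_avg : ∑ z, BSC q false z * flipProb z = 0 := by
    have h := hout false false
    rw [BSC_not_left, BSC_self] at h
    have h' : (p - (1 - p)) * ∑ z, BSC q false z * flipProb z = 0 := by linarith
    exact (mul_eq_zero.1 h').resolve_left (by linarith)
  have hflip : ∀ z, flipProb z = 0 :=
    eq_zero_of_sum_BSC_mul_eq_zero hq0 hq1 (fun z => (hP false z).1 _) hflip_avg
  have h := hout true false
  rw [← Bool.not_false, BSC_not_left, Bool.not_not, BSC_self] at h
  simp only [hflip, mul_zero, Finset.sum_const_zero, add_zero] at h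
  linarith

/-- If `0 < q ≤ 1/2` and `0 ≤ p < 1/2`, the `MBAC_{p,q}` is not
`BSC(q)`-overwritable. -/
theorem stmt12 (p q : ℝ) (hq0 : 0 < q) (hq : q ≤ 1 / 2) (hp0 : 0 ≤ p) (hp : p < 1 / 2) :
    ¬ ∃ P : Bool → Bool → Option Bool → ℝ,
      (∀ x' z, (∀ s, 0 ≤ P x' z s) ∧ ∑ s, P x' z s = 1) ∧
      ∀ x x' y, ∑ s, ∑ z, BSC q x z * P x' z s * MBAC p x s y = MBAC p x' none y :=
  stmt12_general p q hq0 hq hp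
end
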